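/- Let σ : ℕ → [0,∞) be a nonnegative sequence with limsup_{n→∞} σ(n)^{1/n} = μ for some μ ∈ (0,∞), and suppose there is D ∈ (0,∞) with σ(n+1) ≤ D·σ(n) for all n. Let h be a nonzero real polynomial with nonnegative coefficients whose coefficients in degrees 0 and 1 vanish, write b_{n,m} for the coefficient of degree m in h^n, and define c(m) = Σ_{n : 2n ≤ m} σ(2n) · b_{n,m}. Let ρ be the unique positive real with h(ρ) = μ^{−2}. Then limsup_{m→∞} c(m)^{1/m} = ρ^{−1}. -/

import Mathlib

open Polynomial Filter

lemma aux_pow_coeff_nonneg (h : Polynomial ℝ) (hhpos : ∀ m : ℕ, 0 ≤ h.coeff m) :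
    ∀ n m : ℕ, 0 ≤ (h ^ n).coeff m := by
  intro n
  induction n with
  | zero => intro m; simp [Polynomial.coeff_one]; positivity
  | succ k ih =>
    intro m
    rw [pow_succ, Polynomial.coeff_mul]
    exact Finset.sum_nonneg fun p _ => mul_nonneg (ih p.1) (hhpos p.2)

lemma aux_coeff_pow_eq_zero (h : Polynomial ℝ) (hc0 : h.coeff 0 = 0) (hc1 : h.coeff 1 = 0)
    {n m : ℕ} (hm : m < 2 * n) : (h ^ n).coeff m = 0 := by
  have hdvd : (X : Polynomial ℝ) ^ 2 ∣ h := by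
    rw [Polynomial.X_pow_dvd_iff]
    intro d hd
    interval_cases d <;> assumption
  have : (X : Polynomial ℝ) ^ (2 * n) ∣ h ^ n := by
    rw [pow_mul]
    exact pow_dvd_pow_of_dvd hdvd n
  exact (Polynomial.X_pow_dvd_iff.mp this) m hm

lemma aux_partial_eval_le (p : Polynomial ℝ) (hp : ∀ m : ℕ, 0 ≤ p.coeff m)
    {x : ℝ} (hx : 0 ≤ x) (M : ℕ) :
    ∑ m ∈ Finset.range M, p.coeff m * x ^ m ≤ p.eval x := by
  have hK : p.natDegree < max M (p.natDegree + 1) :=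
    lt_of_lt_of_le (Nat.lt_succ_self _) (le_max_right _ _)
  rw [Polynomial.eval_eq_sum_range' hK]
  refine Finset.sum_le_sum_of_subset_of_nonneg ?_ ?_
  · exact Finset.range_subset_range.mpr (le_max_left _ _)
  · intro i _ _
    exact mul_nonneg (hp i) (pow_nonneg hx i)

lemma aux_eval_strict_mono (h : Polynomial ℝ) (hh0 : h ≠ 0) (hhpos : ∀ m : ℕ, 0 ≤ h.coeff m)
    (hc0 : h.coeff 0 = 0) {x y : ℝ} (hx : 0 ≤ x) (hxy : x < y) :
    h.eval x < h.eval y := by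
  obtain ⟨m₀, hm₀⟩ : ∃ m₀, h.coeff m₀ ≠ 0 := by
    by_contra hcon
    push_neg at hcon
    exact hh0 (Polynomial.ext fun n => by simp [hcon n])
  have hm₀2 : m₀ ≠ 0 := by rintro rfl; exact hm₀ hc0
  have hK : h.natDegree < h.natDegree + 1 := Nat.lt_succ_self _
  rw [Polynomial.eval_eq_sum_range' hK, Polynomial.eval_eq_sum_range' hK]
  refine Finset.sum_lt_sum (fun i _ => ?_) ⟨m₀, ?_, ?_⟩
  · exact mul_le_mul_of_nonneg_left (pow_le_pow_left₀ hx hxy.le i) (hhpos i)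
  · exact Finset.mem_range.mpr (Nat.lt_succ_of_le (Polynomial.le_natDegree_of_ne_zero hm₀))
  · exact mul_lt_mul_of_pos_left (pow_lt_pow_left₀ hxy hx hm₀2)
      (lt_of_le_of_ne (hhpos m₀) (Ne.symm hm₀))

lemma aux_eval_pos (h : Polynomial ℝ) (hh0 : h ≠ 0) (hhpos : ∀ m : ℕ, 0 ≤ h.coeff m)
    (hc0 : h.coeff 0 = 0) {x : ℝ} (hx : 0 < x) : 0 < h.eval x := by
  have := aux_eval_strict_mono h hh0 hhpos hc0 le_rfl hx
  simpa [← Polynomial.coeff_zero_eq_eval_zero, hc0] using this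

lemma aux_upper_sum (σ : ℕ → ℝ) (hσ : ∀ n, 0 ≤ σ n) (h : Polynomial ℝ)
    (hhpos : ∀ m : ℕ, 0 ≤ h.coeff m) (hc0 : h.coeff 0 = 0) (hc1 : h.coeff 1 = 0)
    (c : ℕ → ℝ)
    (hc : ∀ m : ℕ, c m = ∑ n ∈ Finset.range (m / 2 + 1), σ (2 * n) * (h ^ n).coeff m)
    {x : ℝ} (hx : 0 ≤ x) (M : ℕ) :
    ∑ m ∈ Finset.range M, c m * x ^ m ≤ ∑ n ∈ Finset.range M, σ (2 * n) * (h.eval x) ^ n := by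
  have key : ∀ m ∈ Finset.range M, c m * x ^ m
      = ∑ n ∈ Finset.range M, σ (2 * n) * (h ^ n).coeff m * x ^ m := by
    intro m hm
    rw [hc m, Finset.sum_mul]
    refine Finset.sum_subset ?_ ?_
    · refine Finset.range_subset_range.mpr ?_
      have h1 : m / 2 ≤ m := Nat.div_le_self m 2
      have h2 := Finset.mem_range.mp hm
      omega
    · intro n _ hn
      have h2n : m < 2 * n := by
        simp only [Finset.mem_range, not_lt] at hn
        omega
      rw [aux_coeff_pow_eq_zero h hc0 hc1 h2n]
      ring
  rw [Finset.sum_congr rfl key, Finset.sum_comm]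
  refine Finset.sum_le_sum fun n _ => ?_
  have : ∑ m ∈ Finset.range M, σ (2 * n) * (h ^ n).coeff m * x ^ m
      = σ (2 * n) * ∑ m ∈ Finset.range M, (h ^ n).coeff m * x ^ m := by
    rw [Finset.mul_sum]; congr 1; ext m; ring
  rw [this]
  refine mul_le_mul_of_nonneg_left ?_ (hσ _)
  calc ∑ m ∈ Finset.range M, (h ^ n).coeff m * x ^ m
      ≤ (h ^ n).eval x := aux_partial_eval_le _ (aux_pow_coeff_nonneg h hhpos n) hx M
    _ = (h.eval x) ^ n := by rw [Polynomial.eval_pow]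

lemma aux_lower_sum (σ : ℕ → ℝ) (hσ : ∀ n, 0 ≤ σ n) (h : Polynomial ℝ)
    (hhpos : ∀ m : ℕ, 0 ≤ h.coeff m) (hc0 : h.coeff 0 = 0) (hc1 : h.coeff 1 = 0)
    (c : ℕ → ℝ)
    (hc : ∀ m : ℕ, c m = ∑ n ∈ Finset.range (m / 2 + 1), σ (2 * n) * (h ^ n).coeff m)
    {x : ℝ} (hx : 0 ≤ x) (N : ℕ) :
    ∑ n ∈ Finset.range (N + 1), σ (2 * n) * (h.eval x) ^ n
      ≤ ∑ m ∈ Finset.range (N * h.natDegree + 1), c m * x ^ m := by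
  set M := N * h.natDegree + 1 with hM
  have key : ∀ n ∈ Finset.range (N + 1),
      σ (2 * n) * (h.eval x) ^ n = ∑ m ∈ Finset.range M, σ (2 * n) * (h ^ n).coeff m * x ^ m := by
    intro n hn
    simp only [Finset.mem_range] at hn
    have hdeg : (h ^ n).natDegree < M := by
      have h1 : (h ^ n).natDegree ≤ n * h.natDegree := Polynomial.natDegree_pow_le
      have h2 : n * h.natDegree ≤ N * h.natDegree := Nat.mul_le_mul_right _ (by omega)
      omega
    rw [← Polynomial.eval_pow, Polynomial.eval_eq_sum_range' hdeg, Finset.mul_sum]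
    congr 1; ext m; ring
  rw [Finset.sum_congr rfl key, Finset.sum_comm]
  refine Finset.sum_le_sum fun m hm => ?_
  rw [hc m, Finset.sum_mul]
  set K := max (N + 1) (m / 2 + 1) with hK
  have term_nonneg : ∀ n, 0 ≤ σ (2 * n) * (h ^ n).coeff m * x ^ m := fun n =>
    mul_nonneg (mul_nonneg (hσ _) (aux_pow_coeff_nonneg h hhpos n m)) (pow_nonneg hx m)
  have hle : ∑ n ∈ Finset.range (N + 1), σ (2 * n) * (h ^ n).coeff m * x ^ m
      ≤ ∑ n ∈ Finset.range K, σ (2 * n) * (h ^ n).coeff m * x ^ m :=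
    Finset.sum_le_sum_of_subset_of_nonneg (Finset.range_subset_range.mpr (le_max_left _ _))
      (fun i _ _ => term_nonneg i)
  have heq : ∑ n ∈ Finset.range K, σ (2 * n) * (h ^ n).coeff m * x ^ m
      = ∑ n ∈ Finset.range (m / 2 + 1), σ (2 * n) * (h ^ n).coeff m * x ^ m := by
    symm
    refine Finset.sum_subset (Finset.range_subset_range.mpr (le_max_right _ _)) ?_
    intro n _ hn
    simp only [Finset.mem_range, not_lt] at hn
    have : m < 2 * n := by omega
    rw [aux_coeff_pow_eq_zero h hc0 hc1 this]
    ring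
  exact hle.trans heq.le

lemma aux_geom (r : ℝ) (h0 : 0 ≤ r) (h1 : r < 1) (n : ℕ) :
    ∑ i ∈ Finset.range n, r ^ i ≤ (1 - r)⁻¹ := by
  have h2 : r ≠ 1 := ne_of_lt h1
  have h4 : (0:ℝ) < 1 - r := by linarith
  rw [geom_sum_eq h2, div_le_iff_of_neg (by linarith : r - 1 < 0)]
  have h5 : r ^ n ≥ 0 := pow_nonneg h0 n
  have h6 : (1 - r)⁻¹ * (1 - r) = 1 := inv_mul_cancel₀ (ne_of_gt h4)
  nlinarith [mul_nonneg (le_of_lt (inv_pos.mpr h4)) h5]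

lemma aux_rpow_pow (a : ℝ) (ha : 0 ≤ a) (n : ℕ) (hn : 1 ≤ n) :
    (a ^ (1 / (n : ℝ))) ^ n = a := by
  have hne : (n:ℝ) ≠ 0 := Nat.cast_ne_zero.mpr (by omega)
  rw [← Real.rpow_natCast (a ^ (1/(n:ℝ))) n, ← Real.rpow_mul ha, one_div,
    inv_mul_cancel₀ hne, Real.rpow_one]

lemma aux_rpow_le (c B x : ℝ) (hc : 0 ≤ c) (hB : 0 ≤ B) (hx : 0 < x) {m : ℕ} (hm : 1 ≤ m)
    (hle : c ≤ B * (x⁻¹) ^ m) : c ^ (1/(m:ℝ)) ≤ B ^ (1/(m:ℝ)) * x⁻¹ := by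
  have hne : (m:ℝ) ≠ 0 := Nat.cast_ne_zero.mpr (by omega)
  calc c ^ (1/(m:ℝ)) ≤ (B * (x⁻¹)^m) ^ (1/(m:ℝ)) :=
        Real.rpow_le_rpow hc hle (by positivity)
    _ = B ^ (1/(m:ℝ)) * ((x⁻¹)^m) ^ (1/(m:ℝ)) := Real.mul_rpow hB (by positivity)
    _ = B ^ (1/(m:ℝ)) * x⁻¹ := by
        rw [← Real.rpow_natCast x⁻¹ m, ← Real.rpow_mul (by positivity), mul_one_div,
          div_self hne, Real.rpow_one]

lemma aux_tendsto_rpow (B : ℝ) (hB : 0 < B) :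
    Filter.Tendsto (fun m : ℕ => B ^ (1/(m:ℝ))) Filter.atTop (nhds 1) := by
  have h0 : Filter.Tendsto (fun m : ℕ => (1/(m:ℝ))) Filter.atTop (nhds 0) :=
    tendsto_one_div_atTop_nhds_zero_nat
  have := (Real.continuousAt_const_rpow (a := B) (b := (0:ℝ)) (ne_of_gt hB)).tendsto.comp h0
  simpa [Function.comp_def] using this

lemma aux_global_bound (σ : ℕ → ℝ) (hσ : ∀ n, 0 ≤ σ n) (ν : ℝ) (hν : 0 < ν)
    (hev : ∀ᶠ n in Filter.atTop, σ n ≤ ν ^ n) :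
    ∃ C : ℝ, 1 ≤ C ∧ ∀ n, σ n ≤ C * ν ^ n := by
  obtain ⟨N, hN⟩ := Filter.eventually_atTop.mp hev
  have hsum0 : 0 ≤ ∑ k ∈ Finset.range N, σ k * (ν⁻¹) ^ k :=
    Finset.sum_nonneg fun k _ => mul_nonneg (hσ k) (pow_nonneg (by positivity) k)
  refine ⟨1 + ∑ k ∈ Finset.range N, σ k * (ν⁻¹) ^ k, by linarith, ?_⟩
  intro n
  rcases le_or_gt N n with hn | hn
  · calc σ n ≤ ν ^ n := hN n hn
      _ ≤ (1 + ∑ k ∈ Finset.range N, σ k * (ν⁻¹) ^ k) * ν ^ n :=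
        le_mul_of_one_le_left (pow_nonneg hν.le n) (by linarith)
  · have hmem : σ n * (ν⁻¹) ^ n ≤ ∑ k ∈ Finset.range N, σ k * (ν⁻¹) ^ k :=
      Finset.single_le_sum (f := fun k => σ k * (ν⁻¹) ^ k)
        (fun k _ => mul_nonneg (hσ k) (pow_nonneg (by positivity) k))
        (Finset.mem_range.mpr hn)
    have hid : σ n = σ n * (ν⁻¹) ^ n * ν ^ n := by
      rw [mul_assoc, ← mul_pow, inv_mul_cancel₀ hν.ne', one_pow, mul_one]
    rw [hid]
    refine mul_le_mul_of_nonneg_right ?_ (pow_nonneg hν.le n)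
    linarith

lemma aux_pick_upper (μ t : ℝ) (hμ : 0 < μ) (ht : 0 < t) (hlt : t < (μ^2)⁻¹) :
    ∃ ν : ℝ, μ < ν ∧ ν^2 * t < 1 := by
  set s := (t + (μ^2)⁻¹)/2 with hs
  have hs0 : 0 < s := by positivity
  have hts : t < s := by rw [hs]; linarith
  have hsμ : s < (μ^2)⁻¹ := by rw [hs]; linarith
  have hν2 : (Real.sqrt s⁻¹)^2 = s⁻¹ := Real.sq_sqrt (by positivity)
  refine ⟨Real.sqrt s⁻¹, ?_, ?_⟩
  · have h1 : μ^2 < s⁻¹ := by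
      have h2 : s * μ^2 < 1 := by
        have h3 : (μ^2)⁻¹ * μ^2 = 1 := inv_mul_cancel₀ (by positivity)
        nlinarith [pow_pos hμ 2]
      have h4 : s⁻¹ * (s * μ^2) < s⁻¹ * 1 := by
        exact mul_lt_mul_of_pos_left h2 (inv_pos.mpr hs0)
      rwa [← mul_assoc, inv_mul_cancel₀ hs0.ne', one_mul, mul_one] at h4
    refine lt_of_pow_lt_pow_left₀ 2 (Real.sqrt_nonneg _) ?_
    rwa [hν2]
  · rw [hν2]
    have h4 : s⁻¹ * t < s⁻¹ * s := mul_lt_mul_of_pos_left hts (inv_pos.mpr hs0)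
    rwa [inv_mul_cancel₀ hs0.ne'] at h4

lemma aux_pick_lower (μ t : ℝ) (hμ : 0 < μ) (hlt : (μ^2)⁻¹ < t) :
    ∃ ν : ℝ, 0 < ν ∧ ν < μ ∧ 1 < ν^2 * t := by
  have htp : 0 < t := lt_trans (by positivity) hlt
  set s := ((μ^2)⁻¹ + t)/2 with hs
  have hs0 : 0 < s := by positivity
  have hts : s < t := by rw [hs]; linarith
  have hsμ : (μ^2)⁻¹ < s := by rw [hs]; linarith
  have hν2 : (Real.sqrt s⁻¹)^2 = s⁻¹ := Real.sq_sqrt (by positivity)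
  refine ⟨Real.sqrt s⁻¹, Real.sqrt_pos.mpr (by positivity), ?_, ?_⟩
  · have h1 : s⁻¹ < μ^2 := by
      have h2 : 1 < s * μ^2 := by
        have h3 : (μ^2)⁻¹ * μ^2 = 1 := inv_mul_cancel₀ (by positivity)
        nlinarith [pow_pos hμ 2]
      have h4 : s⁻¹ * 1 < s⁻¹ * (s * μ^2) := mul_lt_mul_of_pos_left h2 (inv_pos.mpr hs0)
      rwa [← mul_assoc, inv_mul_cancel₀ hs0.ne', one_mul, mul_one] at h4
    refine lt_of_pow_lt_pow_left₀ 2 hμ.le ?_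
    rwa [hν2]
  · rw [hν2]
    have h4 : s⁻¹ * s < s⁻¹ * t := mul_lt_mul_of_pos_left hts (inv_pos.mpr hs0)
    rwa [inv_mul_cancel₀ hs0.ne'] at h4

/-- If `σ : ℕ → [0,∞)` has `limsup σ(n)^{1/n} = μ ∈ (0,∞)` and
`σ(n+1) ≤ D σ(n)` for some `D > 0`; `h` is a nonzero real polynomial with nonnegative
coefficients vanishing in degrees 0 and 1; `b_{n,m}` is the degree-`m` coefficient of
`h^n`; `c(m) = Σ_{n : 2n ≤ m} σ(2n) b_{n,m}`; and `ρ > 0` satisfies `h(ρ) = μ⁻²`,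
then `limsup c(m)^{1/m} = ρ⁻¹`. -/
theorem stmt12 (σ : ℕ → ℝ) (hσ : ∀ n, 0 ≤ σ n) (μ : ℝ) (hμ : 0 < μ)
    (hlim : Filter.limsup (fun n : ℕ => (σ n) ^ (1 / (n : ℝ))) Filter.atTop = μ)
    (D : ℝ) (hD : 0 < D) (hstep : ∀ n : ℕ, σ (n + 1) ≤ D * σ n)
    (h : Polynomial ℝ) (hh0 : h ≠ 0) (hhpos : ∀ m : ℕ, 0 ≤ h.coeff m)
    (hc0 : h.coeff 0 = 0) (hc1 : h.coeff 1 = 0)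
    (c : ℕ → ℝ)
    (hc : ∀ m : ℕ, c m = ∑ n ∈ Finset.range (m / 2 + 1), σ (2 * n) * (h ^ n).coeff m)
    (ρ : ℝ) (hρ : 0 < ρ) (hhρ : h.eval ρ = (μ ^ 2)⁻¹) :
    Filter.limsup (fun m : ℕ => (c m) ^ (1 / (m : ℝ))) Filter.atTop = ρ⁻¹ := by
  have hcnn : ∀ m, 0 ≤ c m := fun m => by
    rw [hc m]
    exact Finset.sum_nonneg fun n _ => mul_nonneg (hσ _) (aux_pow_coeff_nonneg h hhpos n m)
  set u : ℕ → ℝ := fun n => σ n ^ (1 / (n : ℝ)) with hu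
  have hun : ∀ n, 0 ≤ u n := fun n => Real.rpow_nonneg (hσ n) _
  have hucob : IsCoboundedUnder (· ≤ ·) atTop u :=
    isCoboundedUnder_le_of_eventually_le atTop (x := 0) (Eventually.of_forall hun)
  have hubdd : IsBoundedUnder (· ≤ ·) atTop u := by
    by_contra hb
    have hempty : {a : ℝ | ∀ᶠ n in atTop, u n ≤ a} = ∅ := by
      ext a
      simp only [Set.mem_setOf_eq, Set.mem_empty_iff_false, iff_false]
      intro ha
      exact hb ⟨a, eventually_map.mpr ha⟩
    rw [Filter.limsup_eq, hempty, Real.sInf_empty] at hlim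
    exact hμ.ne' hlim.symm
  -- nonnegativity of the c-sequence in rpow form
  have hcv : ∀ m, 0 ≤ c m ^ (1 / (m:ℝ)) := fun m => Real.rpow_nonneg (hcnn m) _
  have hccob : IsCoboundedUnder (· ≤ ·) atTop (fun m : ℕ => c m ^ (1 / (m:ℝ))) :=
    isCoboundedUnder_le_of_eventually_le atTop (x := 0) (Eventually.of_forall hcv)
  -- key bound for x < ρ
  have key_bound : ∀ x : ℝ, 0 < x → x < ρ → ∃ B : ℝ, 1 ≤ B ∧ ∀ m : ℕ, c m ≤ B * (x⁻¹) ^ m := by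
    intro x hx hxρ
    have ht : 0 < h.eval x := aux_eval_pos h hh0 hhpos hc0 hx
    have htρ : h.eval x < (μ^2)⁻¹ := by
      rw [← hhρ]; exact aux_eval_strict_mono h hh0 hhpos hc0 hx.le hxρ
    obtain ⟨ν, hμν, hν1⟩ := aux_pick_upper μ (h.eval x) hμ ht htρ
    have hν0 : 0 < ν := lt_trans hμ hμν
    have hev : ∀ᶠ n in atTop, σ n ≤ ν ^ n := by
      have h1 : ∀ᶠ n in atTop, u n < ν :=
        eventually_lt_of_limsup_lt (by rw [hlim]; exact hμν) hubdd
      filter_upwards [h1, eventually_ge_atTop 1] with n hn hn1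
      calc σ n = (u n) ^ n := (aux_rpow_pow (σ n) (hσ n) n hn1).symm
        _ ≤ ν ^ n := pow_le_pow_left₀ (hun n) hn.le n
    obtain ⟨C, hC1, hCb⟩ := aux_global_bound σ hσ ν hν0 hev
    set r := ν^2 * h.eval x with hr
    have hr0 : 0 ≤ r := by positivity
    have hr1lt : (0:ℝ) < 1 - r := by linarith
    have hinv1 : 1 ≤ (1 - r)⁻¹ := by
      rw [le_inv_comm₀ one_pos hr1lt]
      linarith
    refine ⟨C * (1 - r)⁻¹, by nlinarith, ?_⟩
    intro m
    have h1 : c m * x ^ m ≤ ∑ m' ∈ Finset.range (m+1), c m' * x ^ m' :=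
      Finset.single_le_sum (f := fun i => c i * x ^ i)
        (fun i _ => mul_nonneg (hcnn i) (pow_nonneg hx.le i)) (Finset.self_mem_range_succ m)
    have h2 := aux_upper_sum σ hσ h hhpos hc0 hc1 c hc hx.le (m+1)
    have h3 : ∑ n ∈ Finset.range (m+1), σ (2*n) * (h.eval x) ^ n ≤ C * (1-r)⁻¹ := by
      calc ∑ n ∈ Finset.range (m+1), σ (2*n) * (h.eval x) ^ n
          ≤ ∑ n ∈ Finset.range (m+1), C * r ^ n := by
            refine Finset.sum_le_sum fun n _ => ?_
            calc σ (2*n) * (h.eval x) ^ n ≤ (C * ν ^ (2*n)) * (h.eval x) ^ n :=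
                  mul_le_mul_of_nonneg_right (hCb (2*n)) (pow_nonneg ht.le n)
              _ = C * r ^ n := by rw [hr, mul_pow, pow_mul]; ring
        _ = C * ∑ n ∈ Finset.range (m+1), r ^ n := by rw [Finset.mul_sum]
        _ ≤ C * (1-r)⁻¹ :=
            mul_le_mul_of_nonneg_left (aux_geom r hr0 (by linarith) (m+1)) (by linarith)
    have h4 : c m * x ^ m ≤ C * (1-r)⁻¹ := le_trans h1 (le_trans h2 h3)
    calc c m = c m * x ^ m * (x⁻¹) ^ m := by
          rw [mul_assoc, ← mul_pow, mul_inv_cancel₀ hx.ne', one_pow, mul_one]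
      _ ≤ (C * (1-r)⁻¹) * (x⁻¹) ^ m :=
          mul_le_mul_of_nonneg_right h4 (pow_nonneg (by positivity) m)
  -- key upper limsup bound, plus boundedness
  have key_upper : ∀ x : ℝ, 0 < x → x < ρ →
      (limsup (fun m : ℕ => c m ^ (1 / (m:ℝ))) atTop ≤ x⁻¹ ∧
        IsBoundedUnder (· ≤ ·) atTop (fun m : ℕ => c m ^ (1 / (m:ℝ)))) := by
    intro x hx hxρ
    obtain ⟨B, hB1, hB⟩ := key_bound x hx hxρ
    have hevle : ∀ᶠ m in atTop, c m ^ (1 / (m:ℝ)) ≤ B ^ (1/(m:ℝ)) * x⁻¹ := by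
      filter_upwards [eventually_ge_atTop 1] with m hm
      exact aux_rpow_le (c m) B x (hcnn m) (by linarith) hx hm (hB m)
    have htend : Tendsto (fun m : ℕ => B ^ (1/(m:ℝ)) * x⁻¹) atTop (nhds x⁻¹) := by
      have := (aux_tendsto_rpow B (by linarith)).mul_const x⁻¹
      rwa [one_mul] at this
    have hbddR : IsBoundedUnder (· ≤ ·) atTop (fun m : ℕ => B ^ (1/(m:ℝ)) * x⁻¹) :=
      htend.isBoundedUnder_le
    refine ⟨?_, hbddR.mono_le hevle⟩
    calc limsup (fun m : ℕ => c m ^ (1 / (m:ℝ))) atTop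
        ≤ limsup (fun m : ℕ => B ^ (1/(m:ℝ)) * x⁻¹) atTop :=
          limsup_le_limsup hevle hccob hbddR
      _ = x⁻¹ := htend.limsup_eq
  have hcbdd : IsBoundedUnder (· ≤ ·) atTop (fun m : ℕ => c m ^ (1 / (m:ℝ))) :=
    (key_upper (ρ/2) (by linarith) (by linarith)).2
  have hupper : limsup (fun m : ℕ => c m ^ (1 / (m:ℝ))) atTop ≤ ρ⁻¹ := by
    refine le_of_forall_gt_imp_ge_of_dense fun a ha => ?_
    have ha0 : 0 < a := lt_trans (inv_pos.mpr hρ) ha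
    have hxρ : a⁻¹ < ρ := (inv_lt_comm₀ ha0 hρ).mpr ha
    have := (key_upper a⁻¹ (inv_pos.mpr ha0) hxρ).1
    rwa [inv_inv] at this
  -- lower bound
  have hL0 : 0 ≤ limsup (fun m : ℕ => c m ^ (1 / (m:ℝ))) atTop :=
    le_limsup_of_frequently_le (Frequently.of_forall hcv) hcbdd
  refine le_antisymm hupper ?_
  by_contra hne
  push_neg at hne
  obtain ⟨y, hy1, hy2⟩ := exists_between hne
  obtain ⟨y', hy'1, hy'2⟩ := exists_between hy2
  have hy0 : 0 < y := lt_of_le_of_lt hL0 hy1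
  have hy'0 : 0 < y' := lt_trans hy0 hy'1
  set x := y'⁻¹ with hxdef
  have hx0 : 0 < x := inv_pos.mpr hy'0
  have hxρ : ρ < x := by
    rw [hxdef, lt_inv_comm₀ hρ hy'0]
    exact hy'2
  have htpos : 0 < h.eval x := aux_eval_pos h hh0 hhpos hc0 hx0
  have hev : ∀ᶠ m in atTop, c m ≤ y ^ m := by
    have h1 : ∀ᶠ m in atTop, c m ^ (1 / (m:ℝ)) < y := eventually_lt_of_limsup_lt hy1 hcbdd
    filter_upwards [h1, eventually_ge_atTop 1] with m hm hm1
    calc c m = (c m ^ (1 / (m:ℝ))) ^ m := (aux_rpow_pow _ (hcnn m) m hm1).symm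
      _ ≤ y ^ m := pow_le_pow_left₀ (hcv m) hm.le m
  obtain ⟨N₁, hN₁⟩ := eventually_atTop.mp hev
  set q := y * x with hqdef
  have hq1 : q < 1 := by
    rw [hqdef, hxdef, ← div_eq_mul_inv, div_lt_one hy'0]
    exact hy'1
  have hq0 : 0 ≤ q := by positivity
  set S := (∑ m ∈ Finset.range N₁, c m * x ^ m) + (1 - q)⁻¹ with hSdef
  have hSb : ∀ M, ∑ m ∈ Finset.range M, c m * x ^ m ≤ S := by
    intro M
    set M' := max M N₁ with hM'
    have h1 : ∑ m ∈ Finset.range M, c m * x ^ m ≤ ∑ m ∈ Finset.range M', c m * x ^ m :=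
      Finset.sum_le_sum_of_subset_of_nonneg (Finset.range_subset_range.mpr (le_max_left _ _))
        (fun i _ _ => mul_nonneg (hcnn i) (pow_nonneg hx0.le i))
    have h2 : (∑ m ∈ Finset.range N₁, c m * x ^ m) + ∑ m ∈ Finset.Ico N₁ M', c m * x ^ m
        = ∑ m ∈ Finset.range M', c m * x ^ m := by
      exact Finset.sum_range_add_sum_Ico _ (le_max_right M N₁)
    have h3 : ∑ m ∈ Finset.Ico N₁ M', c m * x ^ m ≤ (1-q)⁻¹ := by
      calc ∑ m ∈ Finset.Ico N₁ M', c m * x ^ m ≤ ∑ m ∈ Finset.Ico N₁ M', q ^ m := by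
            refine Finset.sum_le_sum fun m hm => ?_
            have hmN := (Finset.mem_Ico.mp hm).1
            calc c m * x ^ m ≤ y ^ m * x ^ m :=
                  mul_le_mul_of_nonneg_right (hN₁ m hmN) (pow_nonneg hx0.le m)
              _ = q ^ m := by rw [hqdef, mul_pow]
        _ ≤ ∑ m ∈ Finset.range M', q ^ m := by
            have hsub : Finset.Ico N₁ M' ⊆ Finset.range M' := by
              intro i hi
              rw [Finset.mem_range]
              exact (Finset.mem_Ico.mp hi).2
            exact Finset.sum_le_sum_of_subset_of_nonneg hsub
              (fun i _ _ => pow_nonneg hq0 i)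
        _ ≤ (1-q)⁻¹ := aux_geom q hq0 hq1 M'
    rw [hSdef]
    linarith
  have hterm : ∀ n : ℕ, σ (2*n) * (h.eval x) ^ n ≤ S := by
    intro n
    have h1 : σ (2*n) * (h.eval x) ^ n
        ≤ ∑ k ∈ Finset.range (n+1), σ (2*k) * (h.eval x) ^ k :=
      Finset.single_le_sum (f := fun k => σ (2*k) * (h.eval x) ^ k)
        (fun i _ => mul_nonneg (hσ _) (pow_nonneg htpos.le i)) (Finset.self_mem_range_succ n)
    exact h1.trans ((aux_lower_sum σ hσ h hhpos hc0 hc1 c hc hx0.le n).trans (hSb _))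
  have htx : (μ^2)⁻¹ < h.eval x := by
    rw [← hhρ]
    exact aux_eval_strict_mono h hh0 hhpos hc0 hρ.le hxρ
  obtain ⟨ν, hν0, hνμ, hν1⟩ := aux_pick_lower μ (h.eval x) hμ htx
  set e := min 1 (ν / D) with hedef
  have he0 : 0 < e := lt_min one_pos (div_pos hν0 hD)
  have he1 : e ≤ 1 := min_le_left _ _
  have hfreq : ∀ N : ℕ, ∃ k ≥ N, e * (ν^2 * h.eval x) ^ k ≤ S := by
    intro N
    have hf : ∃ᶠ n in atTop, ν < u n :=
      frequently_lt_of_lt_limsup hucob (by rw [hlim]; exact hνμ)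
    obtain ⟨n, hnN, hn⟩ := frequently_atTop.mp hf (2*N+1)
    have hn1 : 1 ≤ n := by omega
    have hσn : ν ^ n ≤ σ n := by
      calc ν ^ n ≤ (u n) ^ n := pow_le_pow_left₀ hν0.le hn.le n
        _ = σ n := aux_rpow_pow (σ n) (hσ n) n hn1
    rcases Nat.even_or_odd n with ⟨k, hk⟩ | ⟨k, hk⟩
    · refine ⟨k, by omega, ?_⟩
      have hσ2k : e * ν ^ (2*k) ≤ σ (2*k) := by
        have h5 : ν ^ (2*k) ≤ σ (2*k) := by rw [show 2*k = n by omega]; exact hσn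
        have h6 : e * ν ^ (2*k) ≤ 1 * ν ^ (2*k) :=
          mul_le_mul_of_nonneg_right he1 (pow_nonneg hν0.le _)
        rw [one_mul] at h6
        linarith
      calc e * (ν^2 * h.eval x) ^ k = (e * ν ^ (2*k)) * (h.eval x) ^ k := by
            rw [mul_pow, pow_mul]; ring
        _ ≤ σ (2*k) * (h.eval x) ^ k :=
            mul_le_mul_of_nonneg_right hσ2k (pow_nonneg htpos.le k)
        _ ≤ S := hterm k
    · refine ⟨k, by omega, ?_⟩
      have hσ2k : e * ν ^ (2*k) ≤ σ (2*k) := by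
        have h5 : ν ^ (2*k+1) ≤ σ (2*k+1) := by rw [show 2*k+1 = n by omega]; exact hσn
        have h6 : e ≤ ν / D := min_le_right _ _
        have h7 : σ (2*k+1) ≤ D * σ (2*k) := hstep (2*k)
        have h8 : e * ν ^ (2*k) ≤ (ν / D) * ν ^ (2*k) :=
          mul_le_mul_of_nonneg_right h6 (pow_nonneg hν0.le _)
        have h9 : (ν / D) * ν ^ (2*k) = ν ^ (2*k+1) / D := by rw [pow_succ]; ring
        have h10 : ν ^ (2*k+1) / D ≤ σ (2*k+1) / D := by gcongr
        have h11 : σ (2*k+1) / D ≤ σ (2*k) := by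
          rw [div_le_iff₀ hD]; linarith
        have h12 := h8.trans_eq h9
        linarith
      calc e * (ν^2 * h.eval x) ^ k = (e * ν ^ (2*k)) * (h.eval x) ^ k := by
            rw [mul_pow, pow_mul]; ring
        _ ≤ σ (2*k) * (h.eval x) ^ k :=
            mul_le_mul_of_nonneg_right hσ2k (pow_nonneg htpos.le k)
        _ ≤ S := hterm k
  have hr1 : (1:ℝ) < ν^2 * h.eval x := hν1
  have htendS : Tendsto (fun k : ℕ => e * (ν^2 * h.eval x) ^ k) atTop atTop :=
    (tendsto_pow_atTop_atTop_of_one_lt hr1).const_mul_atTop he0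
  obtain ⟨K, hK⟩ := eventually_atTop.mp (htendS.eventually_gt_atTop S)
  obtain ⟨k, hkK, hk⟩ := hfreq K
  exact absurd hk (not_le.mpr (hK k hkK))
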